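/- If every subgroup of a Hausdorff topological group G is locally pseudocompact (with the subspace topology), then G is discrete. -/

import Mathlib

/-- A topological space is *pseudocompact* if every continuous real-valued function
on it is bounded. -/
def Pseudocompact (X : Type*) [TopologicalSpace X] : Prop :=
  ∀ f : X → ℝ, Continuous f → ∃ M : ℝ, ∀ x : X, |f x| ≤ M

/-- A topological group is *locally pseudocompact* if some neighborhood of the identity
has pseudocompact closure. -/
def LocallyPseudocompact (G : Type*) [Group G] [TopologicalSpace G] : Prop :=
  ∃ U ∈ nhds (1 : G), Pseudocompact (closure U)

/-!
Bumps of heights `1, 2, 3, …` on an infinite locally finite family of pairwise disjoint open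
sets add up to an unbounded continuous function, so no such family can have its peaks in a
pseudocompact set. In a uniform space, small balls around a separated sequence form such a
family; hence a set with pseudocompact closure is totally bounded. In a countable Tychonoff
space continuous functions omit values, so the clopen sets form a base; if no point is
isolated, one peels off clopen pieces of an open set while excluding the points one at a time,
and the pieces form such a family. So a countable locally pseudocompact group is discrete.

If `G` were not discrete, a neighbourhood `U` of `1` with pseudocompact closure would be
infinite. An injective sequence in `U` generates a countable subgroup `H`, discrete by the
countable case, and a discrete subgroup meets the totally bounded set `U` in finitely many
points.
-/

open Set Filter Topology Function UniformSpace
open scoped Uniformity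

section Pseudocompact

variable {X : Type*} [TopologicalSpace X]

theorem Pseudocompact.image {Y : Type*} [TopologicalSpace Y] {s : Set X}
    (hs : Pseudocompact s) {f : X → Y} (hf : Continuous f) : Pseudocompact (f '' s) := by
  intro g hg
  obtain ⟨M, hM⟩ := hs (g ∘ imageFactorization f s)
    (hg.comp ((hf.comp continuous_subtype_val).subtype_mk _))
  exact ⟨M, imageFactorization_surjective.forall.2 hM⟩

theorem not_pseudocompact_of_locallyFinite {s : Set X} {φ : ℕ → X → ℝ}
    (hφ : ∀ n, Continuous (φ n)) (hlf : LocallyFinite fun n ↦ support (φ n))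
    (hdisj : Pairwise (Disjoint on fun n ↦ support (φ n))) {p : ℕ → X} (hps : ∀ n, p n ∈ s)
    (hp : ∀ n, φ n (p n) = 1) : ¬ Pseudocompact s := by
  intro hs
  let f : X → ℝ := fun x ↦ ∑ᶠ n : ℕ, (n : ℝ) * φ n x
  have hfc : Continuous f := continuous_finsum (fun n ↦ continuous_const.mul (hφ n))
    (hlf.subset fun n ↦ support_mul_subset_right _ _)
  have hfp : ∀ n, f (p n) = n := fun n ↦ by
    have hpn : p n ∈ support (φ n) := by simp [hp]
    show ∑ᶠ m : ℕ, (m : ℝ) * φ m (p n) = n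
    rw [finsum_eq_single _ n fun m hm ↦ ?_, hp, mul_one]
    rw [notMem_support.1 (disjoint_left.1 (hdisj hm.symm) hpn), mul_zero]
  obtain ⟨M, hM⟩ := hs (fun x ↦ f x) (hfc.comp continuous_subtype_val)
  obtain ⟨n, hn⟩ := exists_nat_gt M
  have := hM ⟨p n, hps n⟩
  rw [hfp, Nat.abs_cast] at this
  linarith

theorem exists_continuous_eq_one_support_subset [CompletelyRegularSpace X] {x : X}
    {O : Set X} (hO : IsOpen O) (hx : x ∈ O) :
    ∃ φ : X → ℝ, Continuous φ ∧ φ x = 1 ∧ support φ ⊆ O := by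
  obtain ⟨f, hfc, hfx, hfO⟩ := CompletelyRegularSpace.completely_regular_isOpen x O hO hx
  refine ⟨fun y ↦ 1 - f y, by fun_prop, by simp [hfx], fun y hy ↦ ?_⟩
  by_contra hyO
  simp [hfO hyO] at hy

theorem IsClopen.exists_isClopen_subset_notMem [T1Space X] [PerfectSpace X]
    (hB : TopologicalSpace.IsTopologicalBasis {s : Set X | IsClopen s}) {D : Set X}
    (hD : IsClopen D) (hne : D.Nonempty) (e : X) :
    ∃ D' ⊆ D, IsClopen D' ∧ D'.Nonempty ∧ (D \ D').Nonempty ∧ e ∉ D' := by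
  obtain ⟨x, hx⟩ := hne
  have hinf : (D \ {e}).Infinite :=
    (infinite_of_mem_nhds x (hD.isOpen.mem_nhds hx)).sdiff (finite_singleton e)
  obtain ⟨b, hbD, hbe⟩ := hinf.nonempty
  obtain ⟨a, ⟨haD, hae⟩, hab⟩ := (hinf.sdiff (finite_singleton b)).nonempty
  have hb : b ∈ ({a, e} : Set X)ᶜ := by simp_all [eq_comm]
  obtain ⟨K, hK, hbK, hKae⟩ :=
    hB.exists_subset_of_mem_open hb (toFinite {a, e}).isClosed.isOpen_compl
  refine ⟨D ∩ K, inter_subset_left, hD.inter hK, ⟨b, hbD, hbK⟩, ⟨a, haD, fun h ↦ ?_⟩,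
    fun h ↦ ?_⟩ <;> exact hKae h.2 (by simp)

theorem not_pseudocompact_of_countable [Countable X] [T1Space X] [CompletelyRegularSpace X]
    [PerfectSpace X] {s : Set X} (hs : (interior s).Nonempty) : ¬ Pseudocompact s := by
  have hB : TopologicalSpace.IsTopologicalBasis {s : Set X | IsClopen s} :=
    CompletelyRegularSpace.isTopologicalBasis_clopens_of_cardinalMk_lt_continuum <|
      (Cardinal.mk_le_aleph0_iff.mpr inferInstance).trans_lt Cardinal.aleph0_lt_continuum
  obtain ⟨x₀, hx₀⟩ := hs
  obtain ⟨D₀, hD₀, hx₀D₀, hD₀s⟩ := hB.exists_subset_of_mem_open hx₀ isOpen_interior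
  have : Nonempty X := ⟨x₀⟩
  obtain ⟨e, he⟩ := exists_surjective_nat X
  choose! next hnext_sub hnext_clopen hnext_ne hnext_diff hnext_e using
    fun n D (hD : IsClopen D ∧ D.Nonempty) ↦ hD.1.exists_isClopen_subset_notMem hB hD.2 (e n)
  let D : ℕ → Set X := fun n ↦ Nat.rec (motive := fun _ ↦ Set X) D₀ next n
  have hD : ∀ n, IsClopen (D n) ∧ (D n).Nonempty := fun n ↦ by
    induction n with
    | zero => exact ⟨hD₀, x₀, hx₀D₀⟩
    | succ n ih => exact ⟨hnext_clopen n _ ih, hnext_ne n _ ih⟩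
  have hanti : Antitone D := antitone_nat_of_succ_le fun n ↦ hnext_sub n _ (hD n)
  let C : ℕ → Set X := fun n ↦ D n \ D (n + 1)
  have hC : ∀ n, IsClopen (C n) := fun n ↦ (hD n).1.diff (hD (n + 1)).1
  have hCsub : ∀ {m n}, n < m → C m ⊆ D (n + 1) := fun h ↦ sdiff_subset.trans (hanti h)
  have hdisj : Pairwise (Disjoint on C) := (pairwise_disjoint_on C).2 fun m n h ↦
    disjoint_sdiff_left.mono_right (hCsub h)
  have hlf : LocallyFinite C := fun z ↦ by
    obtain ⟨j, rfl⟩ := he z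
    refine ⟨(D (j + 1))ᶜ, (hD (j + 1)).1.isClosed.isOpen_compl.mem_nhds (hnext_e j _ (hD j)),
      (finite_Iic j).subset fun m hm ↦ mem_Iic.2 <| not_lt.1 fun hjm ↦ ?_⟩
    obtain ⟨y, hyC, hyD⟩ := hm
    exact hyD (hCsub hjm hyC)
  choose p hp using fun n ↦ hnext_diff n _ (hD n)
  refine not_pseudocompact_of_locallyFinite (φ := fun n ↦ (C n).indicator 1)
    (fun n ↦ (hC n).continuous_indicator continuous_const)
    (hlf.subset fun n ↦ support_indicator_subset)
    (hdisj.mono fun m n h ↦ h.mono support_indicator_subset support_indicator_subset)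
    (fun n ↦ ?_) (fun n ↦ indicator_of_mem (hp n) 1)
  exact interior_subset (hD₀s (hanti n.zero_le (hp n).1))

end Pseudocompact

section Uniform

variable {X : Type*} [UniformSpace X]

theorem TotallyBounded.finite_of_pairwise_notMem {s : Set X} (hs : TotallyBounded s)
    {V : SetRel X X} (hV : V ∈ 𝓤 X) (hsV : s.Pairwise fun x y ↦ (x, y) ∉ V) : s.Finite := by
  obtain ⟨W, hW, _, hWV⟩ := comp_symm_mem_uniformity_sets hV
  obtain ⟨t, ht, hst⟩ := hs W hW
  refine (ht.biUnion fun y _ ↦ Subsingleton.finite (s := {x | (x, y) ∈ W} ∩ s) ?_).subset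
    fun x hx ↦ ?_
  · rintro a ⟨hay, has⟩ b ⟨hby, hbs⟩
    by_contra hab
    exact hsV has hbs hab (hWV ⟨y, hay, SetRel.symm W hby⟩)
  · obtain ⟨y, hy, hxy⟩ := mem_iUnion₂.1 (hst hx)
    exact mem_iUnion₂.2 ⟨y, hy, hxy, hx⟩

theorem totallyBounded_of_pseudocompact_closure {s : Set X}
    (hs : Pseudocompact (closure s)) : TotallyBounded s := by
  refine totallyBounded_of_forall_isSymm fun V hV _ ↦ ?_
  by_contra! hcover
  obtain ⟨x, hxs, hsep⟩ := exists_seq_of_forall_finset_exists (· ∈ s) (fun a b ↦ b ∉ ball a V)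
    fun t _ ↦ by
      obtain ⟨y, hys, hy⟩ := not_subset.1 (hcover t t.finite_toSet)
      exact ⟨y, hys, by simpa using hy⟩
  have hxV : ∀ m n, (x m, x n) ∈ V → m = n := fun m n hmn ↦ by
    by_contra hne
    rcases Nat.lt_or_gt_of_ne hne with h | h
    · exact hsep m n h hmn
    · exact hsep n m h (SetRel.symm V hmn)
  obtain ⟨V₁, hV₁, _, hV₁V⟩ := comp_symm_mem_uniformity_sets hV
  obtain ⟨W, hW, hWo, _, hWV₁⟩ := comp_open_symm_mem_uniformity_sets hV₁
  have hmeet : ∀ z m n, (ball (x m) W ∩ ball z W).Nonempty →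
      (ball (x n) W ∩ ball z W).Nonempty → m = n := by
    rintro z m n ⟨y, hmy, hzy⟩ ⟨y', hny', hzy'⟩
    have hmz : (x m, z) ∈ V₁ := hWV₁ ⟨y, hmy, SetRel.symm W hzy⟩
    have hzn : (z, x n) ∈ V₁ := hWV₁ ⟨y', hzy', SetRel.symm W hny'⟩
    exact hxV m n (hV₁V ⟨z, hmz, hzn⟩)
  choose φ hφ hφx hφW using fun n ↦
    exists_continuous_eq_one_support_subset (isOpen_ball (x n) hWo) (mem_ball_self (x n) hW)
  refine not_pseudocompact_of_locallyFinite hφ (fun z ↦ ⟨ball z W, ball_mem_nhds z hW, ?_⟩)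
    (fun m n hmn ↦ ?_) (fun n ↦ subset_closure (hxs n)) hφx hs
  · exact Subsingleton.finite fun m hm n hn ↦ hmeet z m n
      (hm.mono (inter_subset_inter_left _ (hφW m))) (hn.mono (inter_subset_inter_left _ (hφW n)))
  · refine disjoint_left.2 fun y hym hyn ↦ hmn (hmeet y m n ?_ ?_)
    · exact ⟨y, hφW m hym, mem_ball_self y hW⟩
    · exact ⟨y, hφW n hyn, mem_ball_self y hW⟩

end Uniform

section Group

variable {G : Type*} [Group G] [TopologicalSpace G]

theorem perfectSpace_of_not_discreteTopology [SeparatelyContinuousMul G]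
    (h : ¬ DiscreteTopology G) : PerfectSpace G := by
  refine perfectSpace_iff_forall_not_isolated.2 fun x ↦ ⟨fun hx ↦ h ?_⟩
  rw [discreteTopology_iff_isOpen_singleton_one]
  simpa using ((isOpen_singleton_iff_punctured_nhds x).2 hx).preimage (continuous_const_mul x)

theorem LocallyPseudocompact.of_isOpen_subgroup [SeparatelyContinuousMul G] {H : Subgroup G}
    (hH : IsOpen (H : Set G)) (h : LocallyPseudocompact H) : LocallyPseudocompact G := by
  obtain ⟨U, hU, hUc⟩ := h
  have hemb : IsClosedEmbedding ((↑) : H → G) :=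
    (H.isClosed_of_isOpen hH).isClosedEmbedding_subtypeVal
  refine ⟨(↑) '' U, hH.isOpenEmbedding_subtypeVal.image_mem_nhds.2 hU, ?_⟩
  rw [hemb.closure_image_eq]
  exact hUc.image continuous_subtype_val

variable [IsTopologicalGroup G]

instance IsTopologicalGroup.toCompletelyRegularSpace : CompletelyRegularSpace G :=
  letI := IsTopologicalGroup.rightUniformSpace G
  inferInstance

theorem LocallyPseudocompact.discreteTopology_of_countable [Countable G] [T1Space G]
    (h : LocallyPseudocompact G) : DiscreteTopology G := by
  by_contra hG
  have := perfectSpace_of_not_discreteTopology hG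
  obtain ⟨U, hU, hUc⟩ := h
  exact not_pseudocompact_of_countable
    ⟨1, mem_interior_iff_mem_nhds.2 (mem_of_superset hU subset_closure)⟩ hUc

theorem Subgroup.finite_inter_of_pseudocompact_closure (H : Subgroup G) [DiscreteTopology H]
    {s : Set G} (hs : Pseudocompact (_root_.closure s)) : (s ∩ H).Finite := by
  let _ : UniformSpace G := IsTopologicalGroup.rightUniformSpace G
  obtain ⟨V, hV, hVH⟩ : ∃ V ∈ 𝓝 (1 : G), V ∩ H = {1} :=
    nhds_inter_eq_singleton_of_mem_discrete (isDiscrete_iff_discreteTopology.mpr ‹_›) H.one_mem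
  have hV' : (fun p : G × G ↦ p.2 * p.1⁻¹) ⁻¹' V ∈ 𝓤 G := preimage_mem_comap hV
  refine ((totallyBounded_of_pseudocompact_closure hs).subset inter_subset_left)
    |>.finite_of_pairwise_notMem hV' ?_
  rintro x ⟨-, hx⟩ y ⟨-, hy⟩ hxy (hyx : y * x⁻¹ ∈ V)
  have : y * x⁻¹ ∈ V ∩ H := ⟨hyx, H.mul_mem hy (H.inv_mem hx)⟩
  rw [hVH] at this
  exact hxy (eq_of_mul_inv_eq_one this).symm

end Group

/-- if every subgroup of a Hausdorff topological group `G` is locally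
pseudocompact (with the subspace topology), then `G` is discrete. -/
theorem discrete_of_all_subgroups_locallyPseudocompact {G : Type*} [Group G]
    [TopologicalSpace G] [IsTopologicalGroup G] [T2Space G]
    (hG : ∀ H : Subgroup G, LocallyPseudocompact H) :
    DiscreteTopology G := by
  by_contra hdisc
  have := perfectSpace_of_not_discreteTopology hdisc
  obtain ⟨U, hU, hUc⟩ := (hG ⊤).of_isOpen_subgroup (by simp)
  let d : ℕ ↪ U := (infinite_of_mem_nhds 1 hU).natEmbedding U
  let H := (FreeGroup.lift fun n ↦ (d n : G)).range
  have : Countable H := (MonoidHom.rangeRestrict_surjective _).countable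
  have : DiscreteTopology H := (hG H).discreteTopology_of_countable
  have hdH : range (fun n ↦ (d n : G)) ⊆ U ∩ H := by
    rintro _ ⟨n, rfl⟩
    exact ⟨(d n).2, FreeGroup.of n, FreeGroup.lift_apply_of⟩
  exact infinite_range_of_injective (Subtype.val_injective.comp d.injective)
    ((H.finite_inter_of_pseudocompact_closure hUc).subset hdH)
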